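/- Let m > 1 and α > m−1, p = mα/(α−(m−1)), q = (m−1)/(α−(m−1)). For θ = θ(i) = mα/(α − (m−1)(i^{-1}+1)), there exists C > 0 such that for all sufficiently large integers i, i^{q−θ} · Σ_{k=i+1}^{2i} 2^{k(p−θ)} ≤ C · i^{(1−m)α/(α−m+1)}. -/

import Mathlib

/-!
For large `i` the denominator of `θ(i)` lies in `(0, α - (m - 1)]`, so `p ≤ θ(i)`. Every term
`2 ^ (k (p - θ))` of the sum is then at most `1`, the sum is at most `i`, and the left-hand side is
at most `i ^ (q - θ + 1) ≤ i ^ (q + 1 - p)`; finally `q + 1 - p = (1 - m) α / (α - m + 1)`, so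
`C = 1` works.
-/

open Finset Filter

lemma sum_Icc_rpow_natCast_mul_le {b t : ℝ} (hb : 1 ≤ b) (ht : t ≤ 0) (i : ℕ) :
    ∑ k ∈ Icc (i + 1) (2 * i), b ^ ((k : ℝ) * t) ≤ i := by
  calc ∑ k ∈ Icc (i + 1) (2 * i), b ^ ((k : ℝ) * t)
      ≤ ∑ _k ∈ Icc (i + 1) (2 * i), (1 : ℝ) :=
        sum_le_sum fun k _ ↦
          Real.rpow_le_one_of_one_le_of_nonpos hb (mul_nonpos_of_nonneg_of_nonpos k.cast_nonneg ht)
    _ = i := by simp [Nat.card_Icc, show 2 * i + 1 - (i + 1) = i by omega]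

lemma rpow_sub_mul_sum_Icc_two_rpow_le {i : ℕ} (hi : 1 ≤ i) {p q θ : ℝ} (hpθ : p ≤ θ) :
    (i : ℝ) ^ (q - θ) * ∑ k ∈ Icc (i + 1) (2 * i), (2 : ℝ) ^ ((k : ℝ) * (p - θ)) ≤
      (i : ℝ) ^ (q + 1 - p) := by
  have hi₁ : (1 : ℝ) ≤ i := by exact_mod_cast hi
  have hi₀ : (0 : ℝ) < i := by linarith
  calc (i : ℝ) ^ (q - θ) * ∑ k ∈ Icc (i + 1) (2 * i), (2 : ℝ) ^ ((k : ℝ) * (p - θ))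
      ≤ (i : ℝ) ^ (q - θ) * i :=
        mul_le_mul_of_nonneg_left (sum_Icc_rpow_natCast_mul_le one_le_two (by linarith) i)
          (Real.rpow_nonneg hi₀.le _)
    _ = (i : ℝ) ^ (q - θ + 1) := (Real.rpow_add_one hi₀.ne' _).symm
    _ ≤ (i : ℝ) ^ (q + 1 - p) := Real.rpow_le_rpow_of_exponent_le hi₁ (by linarith)

lemma eventually_pos_sub_mul_one_div_add_one {a c : ℝ} (hca : c < a) :
    ∀ᶠ i : ℕ in atTop, 0 < a - c * (1 / (i : ℝ) + 1) := by
  have hlim : Tendsto (fun i : ℕ ↦ a - c * (1 / (i : ℝ) + 1)) atTop (nhds (a - c * (0 + 1))) :=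
    tendsto_const_nhds.sub (tendsto_const_nhds.mul
      (tendsto_one_div_atTop_nhds_zero_nat.add tendsto_const_nhds))
  exact hlim.eventually_const_lt (by linarith)

lemma sub_one_div_add_one_sub_mul_div {m α : ℝ} (hα : α - (m - 1) ≠ 0) :
    (m - 1) / (α - (m - 1)) + 1 - m * α / (α - (m - 1)) = (1 - m) * α / (α - m + 1) := by
  rw [show α - m + 1 = α - (m - 1) by ring]
  field_simp
  ring

theorem geometric_sum_estimate_two (m α : ℝ) (hm : 1 < m) (hα : m - 1 < α) :
    ∃ C > (0:ℝ), ∀ᶠ i : ℕ in atTop,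
      (i : ℝ) ^ ((m - 1) / (α - (m - 1)) - m * α / (α - (m - 1) * (1 / (i : ℝ) + 1))) *
          ∑ k ∈ Finset.Icc (i + 1) (2 * i),
            (2 : ℝ) ^ ((k : ℝ) *
              (m * α / (α - (m - 1)) - m * α / (α - (m - 1) * (1 / (i : ℝ) + 1)))) ≤
        C * (i : ℝ) ^ ((1 - m) * α / (α - m + 1)) := by
  refine ⟨1, one_pos, ?_⟩
  filter_upwards [eventually_pos_sub_mul_one_div_add_one hα, eventually_ge_atTop 1]
    with i hθ_den hi
  have hθ_den_le : α - (m - 1) * (1 / (i : ℝ) + 1) ≤ α - (m - 1) := by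
    have : 0 ≤ (m - 1) * (1 / (i : ℝ)) := mul_nonneg (by linarith) (by positivity)
    linarith
  have hpθ : m * α / (α - (m - 1)) ≤ m * α / (α - (m - 1) * (1 / (i : ℝ) + 1)) :=
    div_le_div_of_nonneg_left (by nlinarith) hθ_den hθ_den_le
  rw [one_mul, ← sub_one_div_add_one_sub_mul_div (by linarith)]
  exact rpow_sub_mul_sum_Icc_two_rpow_le hi hpθ
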